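/- arXiv:1708.00132 — 2 statements merged into one kernel-verified Lean document; each statement's English description precedes it below -/
import Mathlib

section
/- Let Z be an m × n real matrix of rank r, let ε ∈ (0,1), and let Π be a k × m real matrix with k ≥ r. Suppose that ‖Πu‖₂² ∈ [1−ε, 1+ε] for every left singular vector u of Z (i.e., every unit vector u in the column space of Z appearing in a singular value decomposition of Z). Then √((1−ε)/r) · ‖Z‖_s ≤ ‖ΠZ‖_s ≤ √(1+ε) · ‖Z‖_s. -/
open scoped BigOperators
open Matrix

noncomputable section

/-- The Schatten-1 (nuclear) norm of a real matrix: the sum of its singular values,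
realized as the square roots of the eigenvalues of `Aᴴ * A`. -/
def nuclearNorm {m n : Type*} [Fintype m] [Fintype n] [DecidableEq n]
    (A : Matrix m n ℝ) : ℝ :=
  ∑ j, Real.sqrt ((show (Aᵀ * A).IsHermitian by
    simpa using Matrix.isHermitian_conjTranspose_mul_self A).eigenvalues j)

/-- `u` is a left singular vector of `Z`: a unit vector which is an eigenvector of
`Z * Zᵀ` for a nonzero eigenvalue (equivalently, a unit eigenvector of `Z * Zᵀ`
lying in the column space of `Z`, i.e. appearing in a singular value decomposition
of `Z` paired with a nonzero singular value). -/
def IsLeftSingularVector {m n : Type*} [Fintype m] [Fintype n]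
    (Z : Matrix m n ℝ) (u : m → ℝ) : Prop :=
  (∑ i, u i ^ 2 = 1) ∧ ∃ μ : ℝ, μ ≠ 0 ∧ (Z * Zᵀ) *ᵥ u = μ • u

/-! Let `(v_j)` be an orthonormal eigenbasis of `ZᵀZ` with eigenvalues `λ_j = σ_j²`. Then
`Z v_j = σ_j u_j` with `u_j` a left singular vector, so `‖ΠZ v_j‖² ∈ [(1-ε)λ_j, (1+ε)λ_j]`.

For the upper bound, `‖A‖_s ≤ Σ_j ‖A b_j‖` for every orthonormal basis `(b_j)`: pair `A` with its
own singular vectors, expand in `(b_j)`, and apply Cauchy–Schwarz and Bessel. With `A = ΠZ` and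
`b = v` the right-hand side is at most `√(1+ε) Σ_j σ_j`.

For the lower bound, `Σ_j ‖A b_j‖² = tr (AᵀA)` does not depend on the basis, so
`‖ΠZ‖_F² = Σ_j ‖ΠZ v_j‖² ≥ (1-ε) ‖Z‖_F²`; moreover `‖ΠZ‖_s ≥ ‖ΠZ‖_F`, and `‖Z‖_s ≤ √r ‖Z‖_F` by
Cauchy–Schwarz over the `r` nonzero singular values. -/

open scoped InnerProductSpace

section InnerProductSpace

variable {E F : Type*} [NormedAddCommGroup E] [InnerProductSpace ℝ E]
  [NormedAddCommGroup F] [InnerProductSpace ℝ F]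

theorem Orthonormal.sqrt_sum_inner_sq_le {ι : Type*} [Fintype ι] {v : ι → E}
    (hv : Orthonormal ℝ v) (x : E) : √(∑ i, ⟪v i, x⟫_ℝ ^ 2) ≤ ‖x‖ := by
  have bessel := hv.sum_inner_products_le x (s := Finset.univ)
  simp only [Real.norm_eq_abs, sq_abs] at bessel
  exact Real.sqrt_le_sqrt bessel |>.trans_eq (Real.sqrt_sq (norm_nonneg x))

theorem Orthonormal.sum_inner_apply_le_sum_norm_apply {ι κ : Type*} [Fintype ι] [Fintype κ]
    (T : E →ₗ[ℝ] F) {u : ι → F} {v : ι → E} (hu : Orthonormal ℝ u) (hv : Orthonormal ℝ v)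
    (b : OrthonormalBasis κ ℝ E) :
    ∑ i, ⟪u i, T (v i)⟫_ℝ ≤ ∑ j, ‖T (b j)‖ := by
  have expand : ∀ i, ⟪u i, T (v i)⟫_ℝ = ∑ j, ⟪v i, b j⟫_ℝ * ⟪u i, T (b j)⟫_ℝ := by
    intro i
    conv_lhs => rw [← b.sum_repr' (v i)]
    simp [map_sum, inner_sum, inner_smul_right, real_inner_comm]
  calc ∑ i, ⟪u i, T (v i)⟫_ℝ = ∑ j, ∑ i, ⟪v i, b j⟫_ℝ * ⟪u i, T (b j)⟫_ℝ := by
        simp_rw [expand]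
        exact Finset.sum_comm
    _ ≤ ∑ j, √(∑ i, ⟪v i, b j⟫_ℝ ^ 2) * √(∑ i, ⟪u i, T (b j)⟫_ℝ ^ 2) :=
        Finset.sum_le_sum fun j _ => Real.sum_mul_le_sqrt_mul_sqrt _ _ _
    _ ≤ ∑ j, ‖b j‖ * ‖T (b j)‖ := by
        gcongr with j
        · exact hv.sqrt_sum_inner_sq_le _
        · exact hu.sqrt_sum_inner_sq_le _
    _ = ∑ j, ‖T (b j)‖ := by simp [b.orthonormal.1]

theorem LinearMap.sum_norm_sq_apply_orthonormalBasis_eq [FiniteDimensional ℝ E]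
    [FiniteDimensional ℝ F] {ι κ : Type*} [Fintype ι] [Fintype κ] (T : E →ₗ[ℝ] F)
    (b : OrthonormalBasis ι ℝ E) (b' : OrthonormalBasis κ ℝ E) :
    ∑ i, ‖T (b i)‖ ^ 2 = ∑ j, ‖T (b' j)‖ ^ 2 := by
  have hT : ∀ x, ‖T x‖ ^ 2 = ⟪x, (T.adjoint ∘ₗ T) x⟫_ℝ := fun x => by
    rw [← real_inner_self_eq_norm_sq, LinearMap.comp_apply, LinearMap.adjoint_inner_right]
  simp only [hT, ← LinearMap.trace_eq_sum_inner]

end InnerProductSpace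

namespace Matrix

variable {m n : Type*} [Fintype m]

theorem isHermitian_transpose_mul_self (A : Matrix m n ℝ) : (Aᵀ * A).IsHermitian := by
  simpa using isHermitian_conjTranspose_mul_self A

variable [Fintype n] [DecidableEq n] (A : Matrix m n ℝ)

def sqSingularValues : n → ℝ := A.isHermitian_transpose_mul_self.eigenvalues

def rightSingularBasis : OrthonormalBasis n ℝ (EuclideanSpace ℝ n) :=
  A.isHermitian_transpose_mul_self.eigenvectorBasis

/-- This is `0` when `A.sqSingularValues j = 0`, since `0⁻¹ = 0`. -/
def leftSingularVector (j : n) : EuclideanSpace ℝ m :=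
  (√(A.sqSingularValues j))⁻¹ • A.toEuclideanLin (A.rightSingularBasis j)

theorem nuclearNorm_eq_sum_sqrt_sqSingularValues :
    nuclearNorm A = ∑ j, √(A.sqSingularValues j) := rfl

theorem sqSingularValues_nonneg (j : n) : 0 ≤ A.sqSingularValues j :=
  eigenvalues_conjTranspose_mul_self_nonneg A j

theorem transpose_mul_self_mulVec_rightSingularBasis (j : n) :
    (Aᵀ * A) *ᵥ A.rightSingularBasis j = A.sqSingularValues j • ⇑(A.rightSingularBasis j) :=
  A.isHermitian_transpose_mul_self.mulVec_eigenvectorBasis j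

theorem inner_toEuclideanLin_rightSingularBasis (i j : n) :
    ⟪A.toEuclideanLin (A.rightSingularBasis i), A.toEuclideanLin (A.rightSingularBasis j)⟫_ℝ =
      if i = j then A.sqSingularValues j else 0 := by
  classical
  have hgram : ∀ x, Aᵀ.toEuclideanLin (A.toEuclideanLin x) = (Aᵀ * A).toEuclideanLin x := by
    intro x
    simp [toLpLin_apply]
  have heig : (Aᵀ * A).toEuclideanLin (A.rightSingularBasis j) =
      A.sqSingularValues j • A.rightSingularBasis j := by
    rw [toLpLin_apply, transpose_mul_self_mulVec_rightSingularBasis]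
    rfl
  rw [← LinearMap.adjoint_inner_right, ← toEuclideanLin_conjTranspose_eq_adjoint,
    conjTranspose_eq_transpose_of_trivial, hgram, heig, inner_smul_right,
    OrthonormalBasis.inner_eq_ite]
  simp

theorem norm_sq_toEuclideanLin_rightSingularBasis (j : n) :
    ‖A.toEuclideanLin (A.rightSingularBasis j)‖ ^ 2 = A.sqSingularValues j := by
  rw [← real_inner_self_eq_norm_sq, inner_toEuclideanLin_rightSingularBasis, if_pos rfl]

theorem toEuclideanLin_rightSingularBasis (j : n) :
    A.toEuclideanLin (A.rightSingularBasis j) =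
      √(A.sqSingularValues j) • A.leftSingularVector j := by
  rcases (A.sqSingularValues_nonneg j).eq_or_lt with hj | hj
  · rw [← hj, Real.sqrt_zero, zero_smul, ← norm_eq_zero, ← sq_eq_zero_iff,
      norm_sq_toEuclideanLin_rightSingularBasis, hj]
  · rw [leftSingularVector, smul_inv_smul₀ (Real.sqrt_pos.2 hj).ne']

theorem orthonormal_leftSingularVector :
    Orthonormal ℝ fun j : {j // A.sqSingularValues j ≠ 0} => A.leftSingularVector j := by
  rw [orthonormal_iff_ite]
  rintro ⟨i, hi⟩ ⟨j, hj⟩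
  simp only [leftSingularVector, real_inner_smul_left, real_inner_smul_right,
    inner_toEuclideanLin_rightSingularBasis, Subtype.mk.injEq]
  split_ifs with hij
  · subst hij
    rw [← mul_assoc, ← mul_inv, ← sq, Real.sq_sqrt (A.sqSingularValues_nonneg i),
      inv_mul_cancel₀ hi]
  · simp

theorem isLeftSingularVector_leftSingularVector {j : n} (hj : A.sqSingularValues j ≠ 0) :
    IsLeftSingularVector A (A.leftSingularVector j) := by
  refine ⟨?_, A.sqSingularValues j, hj, ?_⟩
  · rw [← EuclideanSpace.real_norm_sq_eq, A.orthonormal_leftSingularVector.1 ⟨j, hj⟩, one_pow]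
  · have hleft : (A * Aᵀ) *ᵥ (A *ᵥ A.rightSingularBasis j) =
        A.sqSingularValues j • (A *ᵥ A.rightSingularBasis j) := by
      rw [mulVec_mulVec, Matrix.mul_assoc, ← mulVec_mulVec,
        transpose_mul_self_mulVec_rightSingularBasis, mulVec_smul]
    simp only [leftSingularVector, toLpLin_apply, WithLp.ofLp_smul, mulVec_smul, hleft]
    exact smul_comm _ _ _

theorem sum_sqSingularValues_eq_sum_norm_sq {ι : Type*} [Fintype ι]
    (b : OrthonormalBasis ι ℝ (EuclideanSpace ℝ n)) :
    ∑ j, A.sqSingularValues j = ∑ i, ‖A.toEuclideanLin (b i)‖ ^ 2 := by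
  simp_rw [← norm_sq_toEuclideanLin_rightSingularBasis]
  exact LinearMap.sum_norm_sq_apply_orthonormalBasis_eq _ _ _

theorem card_sqSingularValues_ne_zero :
    Fintype.card {j // A.sqSingularValues j ≠ 0} = A.rank := by
  rw [← rank_transpose_mul_self]
  exact A.isHermitian_transpose_mul_self.rank_eq_card_non_zero_eigs.symm

theorem nuclearNorm_eq_sum_filter :
    nuclearNorm A =
      ∑ j ∈ Finset.univ.filter (A.sqSingularValues · ≠ 0), √(A.sqSingularValues j) := by
  rw [nuclearNorm_eq_sum_sqrt_sqSingularValues]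
  refine (Finset.sum_filter_of_ne (p := fun j => A.sqSingularValues j ≠ 0) ?_).symm
  intro j _ h hj
  simp [hj] at h

theorem sqrt_sum_sqSingularValues_le_nuclearNorm :
    √(∑ j, A.sqSingularValues j) ≤ nuclearNorm A := by
  rw [nuclearNorm_eq_sum_sqrt_sqSingularValues, Real.sqrt_le_left (by positivity)]
  calc ∑ j, A.sqSingularValues j = ∑ j, √(A.sqSingularValues j) ^ 2 := by
        simp [Real.sq_sqrt (A.sqSingularValues_nonneg _)]
    _ ≤ (∑ j, √(A.sqSingularValues j)) ^ 2 :=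
        Finset.sum_sq_le_sq_sum_of_nonneg fun j _ => Real.sqrt_nonneg _

theorem nuclearNorm_le_sqrt_rank_mul :
    nuclearNorm A ≤ √A.rank * √(∑ j, A.sqSingularValues j) := by
  set s := Finset.univ.filter (A.sqSingularValues · ≠ 0)
  have hs : s.card = A.rank := by
    rw [← card_sqSingularValues_ne_zero, Fintype.card_subtype]
  calc nuclearNorm A = ∑ j ∈ s, 1 * √(A.sqSingularValues j) := by
        simp [nuclearNorm_eq_sum_filter, s]
    _ ≤ √(∑ j ∈ s, 1 ^ 2) * √(∑ j ∈ s, √(A.sqSingularValues j) ^ 2) :=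
        Real.sum_mul_le_sqrt_mul_sqrt _ _ _
    _ ≤ √A.rank * √(∑ j, A.sqSingularValues j) := by
        simp only [one_pow, Finset.sum_const, hs, nsmul_one,
          Real.sq_sqrt (A.sqSingularValues_nonneg _)]
        exact mul_le_mul_of_nonneg_left
          (Real.sqrt_le_sqrt (Finset.sum_le_univ_sum_of_nonneg A.sqSingularValues_nonneg))
          (Real.sqrt_nonneg _)

theorem sqrt_div_rank_mul_nuclearNorm_le {c : ℝ} (hc : 0 ≤ c) :
    √(c / A.rank) * nuclearNorm A ≤ √(c * ∑ j, A.sqSingularValues j) := by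
  have hrank : c / A.rank * A.rank ≤ c := by
    rcases eq_or_ne (A.rank : ℝ) 0 with h | h
    · rw [h, mul_zero]
      exact hc
    · rw [div_mul_cancel₀ _ h]
  calc √(c / A.rank) * nuclearNorm A
        ≤ √(c / A.rank) * (√A.rank * √(∑ j, A.sqSingularValues j)) := by
        gcongr
        exact A.nuclearNorm_le_sqrt_rank_mul
    _ = √(c / A.rank * A.rank) * √(∑ j, A.sqSingularValues j) := by
        rw [Real.sqrt_mul' _ (Nat.cast_nonneg _), mul_assoc]
    _ ≤ √c * √(∑ j, A.sqSingularValues j) := by gcongr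
    _ = √(c * ∑ j, A.sqSingularValues j) := (Real.sqrt_mul hc _).symm

theorem nuclearNorm_le_sum_norm_apply {ι : Type*} [Fintype ι]
    (b : OrthonormalBasis ι ℝ (EuclideanSpace ℝ n)) :
    nuclearNorm A ≤ ∑ i, ‖A.toEuclideanLin (b i)‖ := by
  have hpair : ∀ j : {j // A.sqSingularValues j ≠ 0},
      ⟪A.leftSingularVector j, A.toEuclideanLin (A.rightSingularBasis j)⟫_ℝ =
        √(A.sqSingularValues j) := by
    intro j
    rw [toEuclideanLin_rightSingularBasis, real_inner_smul_right, real_inner_self_eq_norm_sq,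
      A.orthonormal_leftSingularVector.1 j, one_pow, mul_one]
  calc nuclearNorm A = ∑ j : {j // A.sqSingularValues j ≠ 0}, √(A.sqSingularValues j) := by
        rw [nuclearNorm_eq_sum_filter]
        apply Finset.sum_subtype
        simp
    _ = ∑ j : {j // A.sqSingularValues j ≠ 0},
          ⟪A.leftSingularVector j, A.toEuclideanLin (A.rightSingularBasis j)⟫_ℝ := by
        simp only [hpair]
    _ ≤ ∑ i, ‖A.toEuclideanLin (b i)‖ :=
        Orthonormal.sum_inner_apply_le_sum_norm_apply _ A.orthonormal_leftSingularVector
          (A.rightSingularBasis.orthonormal.comp _ Subtype.val_injective) b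

theorem norm_sq_toEuclideanLin_mul_rightSingularBasis_mem_Icc {k : Type*} [Fintype k]
    (Q : Matrix k m ℝ) {a b : ℝ}
    (hQ : ∀ u, IsLeftSingularVector A u → ∑ i, (Q *ᵥ u) i ^ 2 ∈ Set.Icc a b) (j : n) :
    ‖(Q * A).toEuclideanLin (A.rightSingularBasis j)‖ ^ 2 ∈
      Set.Icc (a * A.sqSingularValues j) (b * A.sqSingularValues j) := by
  have hnonneg := A.sqSingularValues_nonneg j
  have hA := congrArg WithLp.ofLp (A.toEuclideanLin_rightSingularBasis j)
  rw [toLpLin_apply, WithLp.ofLp_toLp] at hA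
  have hnorm : ‖(Q * A).toEuclideanLin (A.rightSingularBasis j)‖ ^ 2 =
      (∑ i, (Q *ᵥ A.leftSingularVector j) i ^ 2) * A.sqSingularValues j := by
    rw [toLpLin_apply, ← mulVec_mulVec, hA, WithLp.ofLp_smul, mulVec_smul, WithLp.toLp_smul,
      norm_smul, mul_pow, Real.norm_eq_abs, sq_abs, Real.sq_sqrt hnonneg,
      EuclideanSpace.real_norm_sq_eq, mul_comm]
  rw [hnorm]
  rcases eq_or_ne (A.sqSingularValues j) 0 with hj | hj
  · simp [hj]
  · obtain ⟨ha, hb⟩ := hQ _ (A.isLeftSingularVector_leftSingularVector hj)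
    exact ⟨mul_le_mul_of_nonneg_right ha hnonneg, mul_le_mul_of_nonneg_right hb hnonneg⟩

end Matrix

theorem nuclearNorm_proj_bound_general
    (m n k r : ℕ) (Z : Matrix (Fin m) (Fin n) ℝ) (hrank : Z.rank = r)
    (ε : ℝ) (hε1 : ε < 1)
    (P : Matrix (Fin k) (Fin m) ℝ)
    (hP : ∀ u : Fin m → ℝ, IsLeftSingularVector Z u →
      (∑ i, (P *ᵥ u) i ^ 2) ∈ Set.Icc (1 - ε) (1 + ε)) :
    Real.sqrt ((1 - ε) / r) * nuclearNorm Z ≤ nuclearNorm (P * Z) ∧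
      nuclearNorm (P * Z) ≤ Real.sqrt (1 + ε) * nuclearNorm Z := by
  subst hrank
  set v := Z.rightSingularBasis
  have hPZ := Z.norm_sq_toEuclideanLin_mul_rightSingularBasis_mem_Icc P hP
  constructor
  · calc √((1 - ε) / Z.rank) * nuclearNorm Z
          ≤ √((1 - ε) * ∑ j, Z.sqSingularValues j) :=
          Z.sqrt_div_rank_mul_nuclearNorm_le (by linarith)
      _ ≤ √(∑ j, ‖(P * Z).toEuclideanLin (v j)‖ ^ 2) := by
          rw [Finset.mul_sum]
          gcongr with j
          exact (hPZ j).1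
      _ = √(∑ j, (P * Z).sqSingularValues j) := by rw [sum_sqSingularValues_eq_sum_norm_sq _ v]
      _ ≤ nuclearNorm (P * Z) := sqrt_sum_sqSingularValues_le_nuclearNorm _
  · calc nuclearNorm (P * Z) ≤ ∑ j, ‖(P * Z).toEuclideanLin (v j)‖ :=
          nuclearNorm_le_sum_norm_apply _ v
      _ ≤ ∑ j, √(1 + ε) * √(Z.sqSingularValues j) := by
          gcongr with j
          rw [← Real.sqrt_mul' _ (Z.sqSingularValues_nonneg j)]
          exact Real.le_sqrt_of_sq_le (hPZ j).2
      _ = √(1 + ε) * nuclearNorm Z := by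
          rw [nuclearNorm_eq_sum_sqrt_sqSingularValues, Finset.mul_sum]

/-- Restatement of Theorem 1 in Mu et al.:
if `Π` preserves the squared Euclidean norm of every left singular vector of `Z`
up to a factor `1 ± ε`, and `k ≥ r = rank Z`, then
`√((1−ε)/r) ‖Z‖_s ≤ ‖ΠZ‖_s ≤ √(1+ε) ‖Z‖_s`. -/
theorem nuclearNorm_proj_bound
    (m n k r : ℕ) (Z : Matrix (Fin m) (Fin n) ℝ) (hrank : Z.rank = r)
    (ε : ℝ) (hε0 : 0 < ε) (hε1 : ε < 1)
    (P : Matrix (Fin k) (Fin m) ℝ) (hk : r ≤ k)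
    (hP : ∀ u : Fin m → ℝ, IsLeftSingularVector Z u →
      (∑ i, (P *ᵥ u) i ^ 2) ∈ Set.Icc (1 - ε) (1 + ε)) :
    Real.sqrt ((1 - ε) / r) * nuclearNorm Z ≤ nuclearNorm (P * Z) ∧
      nuclearNorm (P * Z) ≤ Real.sqrt (1 + ε) * nuclearNorm Z :=
  nuclearNorm_proj_bound_general m n k r Z hrank ε hε1 P hP
end
end

section
/- Let X_1, …, X_k be independent standard Gaussian random variables and Z = Σ_{i=1}^k X_i² (a chi-squared random variable with k degrees of freedom). Then for every ε ∈ (0,1), P( Z ∉ [k(1−ε), k(1+ε)] ) ≤ 2 exp(−k(ε² − ε³)/4). -/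
/-!
Chernoff's method. For a standard Gaussian `X` and `t < 1/2`, `E[exp (t X²)] = (1 - 2t)^(-1/2)`,
so by independence `Z = ∑ X_i²` has moment generating function `(1 - 2t)^(-k/2)`. Markov's
inequality for `exp (t Z)` with `t = ε / (2(1 + ε))`, resp. `t = -ε / (2(1 - ε))`, bounds the two
tails by `((1 + ε) e^(-ε))^(k/2)` and `((1 - ε) e^ε)^(k/2)`, and the elementary estimates
`log (1 + ε) ≤ ε - ε²/2 + ε³/2` and `log (1 - ε) ≤ -ε - ε²/2` turn these into the stated bound.
-/

open MeasureTheory ProbabilityTheory Real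

lemma Real.one_add_le_exp_sub_sq_add_cube {x : ℝ} (hx : 0 ≤ x) :
    1 + x ≤ exp (x - x ^ 2 / 2 + x ^ 3 / 2) := by
  have hy : 0 ≤ x - x ^ 2 / 2 + x ^ 3 / 2 := by nlinarith [sq_nonneg (x - 1)]
  refine le_trans ?_ (quadratic_le_exp_of_nonneg hy)
  nlinarith [pow_nonneg hx 3, pow_nonneg hx 4, sq_nonneg (x ^ 2 - x)]

lemma Real.one_sub_le_exp_neg_sub_sq {x : ℝ} (h0 : 0 ≤ x) (h1 : x < 1) :
    1 - x ≤ exp (-x - x ^ 2 / 2) := by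
  have hlog : x + x ^ 2 / 2 ≤ -log (1 - x) := by
    have hpartial := sum_le_hasSum (Finset.range 2) (fun n _ => by positivity)
      (hasSum_pow_div_log_of_abs_lt_one (abs_lt.2 ⟨by linarith, h1⟩))
    norm_num [Finset.sum_range_succ] at hpartial
    linarith
  calc 1 - x = exp (log (1 - x)) := (exp_log (by linarith)).symm
    _ ≤ exp (-x - x ^ 2 / 2) := exp_le_exp.2 (by linarith)

-- For `t ≥ 1/2` both sides are `0`: the integral diverges and `√` of a nonpositive number is `0`.
lemma integral_exp_mul_sq_gaussianReal (t : ℝ) :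
    ∫ x, exp (t * x ^ 2) ∂gaussianReal 0 1 = (√(1 - 2 * t))⁻¹ := by
  have hpdf : ∀ x, gaussianPDFReal 0 1 x • exp (t * x ^ 2) =
      (√(2 * π))⁻¹ * exp (-(1 / 2 - t) * x ^ 2) := fun x => by
    simp only [gaussianPDFReal, NNReal.coe_one, mul_one, sub_zero, smul_eq_mul]
    rw [mul_assoc, ← exp_add]
    ring_nf
  rw [integral_gaussianReal_eq_integral_smul one_ne_zero]
  simp_rw [hpdf]
  rw [integral_const_mul, integral_gaussian, ← sqrt_inv, ← sqrt_mul (by positivity), ← sqrt_inv]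
  congr 1
  field_simp

section SumOfSquares

variable {Ω ι : Type*} {mΩ : MeasurableSpace Ω} {P : Measure Ω}

lemma mgf_sq_of_map_eq_gaussianReal {Y : Ω → ℝ} (hY : P.map Y = gaussianReal 0 1) (t : ℝ) :
    mgf (fun ω => Y ω ^ 2) P t = (√(1 - 2 * t))⁻¹ := by
  have hYm : AEMeasurable Y P := .of_map_ne_zero (by simp [hY, IsProbabilityMeasure.ne_zero])
  rw [mgf, ← integral_exp_mul_sq_gaussianReal, ← hY, integral_map hYm (by fun_prop)]

variable [Fintype ι] {X : ι → Ω → ℝ}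

lemma mgf_sum_sq_of_map_eq_gaussianReal (hindep : iIndepFun X P)
    (hdist : ∀ i, P.map (X i) = gaussianReal 0 1) (t : ℝ) :
    mgf (fun ω => ∑ i, X i ω ^ 2) P t = (√(1 - 2 * t))⁻¹ ^ Fintype.card ι := by
  have hsq : iIndepFun (fun i ω => X i ω ^ 2) P :=
    hindep.comp (fun _ x => x ^ 2) (fun _ => by fun_prop)
  have hYm : ∀ i, AEMeasurable (fun ω => X i ω ^ 2) P := fun i =>
    (AEMeasurable.of_map_ne_zero (by simp [hdist i, IsProbabilityMeasure.ne_zero])).pow_const 2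
  have hprod := hsq.mgf_sum₀ hYm Finset.univ (t := t)
  simp only [mgf_sq_of_map_eq_gaussianReal (hdist _), Finset.prod_const, Finset.card_univ] at hprod
  rw [← hprod]
  congr 1
  ext ω
  simp

lemma integrable_exp_mul_sum_sq_of_map_eq_gaussianReal (hindep : iIndepFun X P)
    (hdist : ∀ i, P.map (X i) = gaussianReal 0 1) {t : ℝ} (ht : t < 1 / 2) :
    Integrable (fun ω => exp (t * ∑ i, X i ω ^ 2)) P :=
  Integrable.of_integral_ne_zero <| by
    have : 0 < 1 - 2 * t := by linarith
    rw [← mgf, mgf_sum_sq_of_map_eq_gaussianReal hindep hdist]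
    positivity

lemma measureReal_sum_sq_ge_le_pow (hindep : iIndepFun X P)
    (hdist : ∀ i, P.map (X i) = gaussianReal 0 1) {t : ℝ} (ht₀ : 0 ≤ t) (ht : t < 1 / 2) (a : ℝ) :
    P.real {ω | Fintype.card ι * a ≤ ∑ i, X i ω ^ 2} ≤
      (exp (-t * a) / √(1 - 2 * t)) ^ Fintype.card ι := by
  have := hindep.isProbabilityMeasure
  have hchernoff := measure_ge_le_exp_mul_mgf (Fintype.card ι * a) ht₀
    (integrable_exp_mul_sum_sq_of_map_eq_gaussianReal hindep hdist ht)
  rw [mgf_sum_sq_of_map_eq_gaussianReal hindep hdist] at hchernoff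
  refine hchernoff.trans_eq ?_
  rw [div_pow, ← exp_nat_mul, div_eq_mul_inv, inv_pow]
  ring_nf

lemma measureReal_sum_sq_le_le_pow (hindep : iIndepFun X P)
    (hdist : ∀ i, P.map (X i) = gaussianReal 0 1) {t : ℝ} (ht : t ≤ 0) (a : ℝ) :
    P.real {ω | ∑ i, X i ω ^ 2 ≤ Fintype.card ι * a} ≤
      (exp (-t * a) / √(1 - 2 * t)) ^ Fintype.card ι := by
  have := hindep.isProbabilityMeasure
  have hchernoff := measure_le_le_exp_mul_mgf (Fintype.card ι * a) ht
    (integrable_exp_mul_sum_sq_of_map_eq_gaussianReal hindep hdist (by linarith))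
  rw [mgf_sum_sq_of_map_eq_gaussianReal hindep hdist] at hchernoff
  refine hchernoff.trans_eq ?_
  rw [div_pow, ← exp_nat_mul, div_eq_mul_inv, inv_pow]
  ring_nf

lemma measureReal_sum_sq_ge_le_exp (hindep : iIndepFun X P)
    (hdist : ∀ i, P.map (X i) = gaussianReal 0 1) {ε : ℝ} (hε : 0 ≤ ε) :
    P.real {ω | Fintype.card ι * (1 + ε) ≤ ∑ i, X i ω ^ 2} ≤
      exp (-Fintype.card ι * (ε ^ 2 - ε ^ 3) / 4) := by
  set t := ε / (2 * (1 + ε)) with ht_def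
  have ht : t < 1 / 2 := by rw [div_lt_iff₀ (by positivity)]; linarith
  have hbase : exp (-t * (1 + ε)) / √(1 - 2 * t) ≤ exp (-(ε ^ 2 - ε ^ 3) / 4) := by
    have h1 : 1 - 2 * t = (1 + ε)⁻¹ := by rw [ht_def]; field_simp; ring
    have h2 : -t * (1 + ε) = -ε / 2 := by rw [ht_def]; field_simp
    calc exp (-t * (1 + ε)) / √(1 - 2 * t) = exp (-ε / 2) * √(1 + ε) := by
          rw [h1, h2, sqrt_inv, div_inv_eq_mul]
      _ ≤ exp (-ε / 2) * exp ((ε - ε ^ 2 / 2 + ε ^ 3 / 2) / 2) := by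
          gcongr
          rw [exp_half]
          exact sqrt_le_sqrt <| one_add_le_exp_sub_sq_add_cube hε
      _ = exp (-(ε ^ 2 - ε ^ 3) / 4) := by rw [← exp_add]; ring_nf
  calc _ ≤ _ := measureReal_sum_sq_ge_le_pow hindep hdist (by positivity) ht (1 + ε)
    _ ≤ exp (-(ε ^ 2 - ε ^ 3) / 4) ^ Fintype.card ι := by gcongr
    _ = _ := by rw [← exp_nat_mul]; ring_nf

lemma measureReal_sum_sq_le_le_exp (hindep : iIndepFun X P)
    (hdist : ∀ i, P.map (X i) = gaussianReal 0 1) {ε : ℝ} (hε₀ : 0 ≤ ε) (hε₁ : ε < 1) :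
    P.real {ω | ∑ i, X i ω ^ 2 ≤ Fintype.card ι * (1 - ε)} ≤
      exp (-Fintype.card ι * ε ^ 2 / 4) := by
  set t := -(ε / (2 * (1 - ε))) with ht_def
  have hε : 0 < 1 - ε := by linarith
  have ht : t ≤ 0 := by simp only [t, neg_nonpos]; positivity
  have hbase : exp (-t * (1 - ε)) / √(1 - 2 * t) ≤ exp (-ε ^ 2 / 4) := by
    have h1 : 1 - 2 * t = (1 - ε)⁻¹ := by rw [ht_def]; field_simp; ring
    have h2 : -t * (1 - ε) = ε / 2 := by rw [ht_def]; field_simp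
    calc exp (-t * (1 - ε)) / √(1 - 2 * t) = exp (ε / 2) * √(1 - ε) := by
          rw [h1, h2, sqrt_inv, div_inv_eq_mul]
      _ ≤ exp (ε / 2) * exp ((-ε - ε ^ 2 / 2) / 2) := by
          gcongr
          rw [exp_half]
          exact sqrt_le_sqrt <| one_sub_le_exp_neg_sub_sq hε₀ hε₁
      _ = exp (-ε ^ 2 / 4) := by rw [← exp_add]; ring_nf
  calc _ ≤ _ := measureReal_sum_sq_le_le_pow hindep hdist ht (1 - ε)
    _ ≤ exp (-ε ^ 2 / 4) ^ Fintype.card ι := by gcongr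
    _ = _ := by rw [← exp_nat_mul]; ring_nf

end SumOfSquares

theorem chi_squared_concentration_general
    (k : ℕ) (Ω : Type*) (mΩ : MeasurableSpace Ω) (P : Measure Ω)
    (X : Fin k → Ω → ℝ)
    (hindep : iIndepFun X P)
    (hdist : ∀ i, Measure.map (X i) P = gaussianReal 0 1)
    (ε : ℝ) (hε0 : 0 < ε) (hε1 : ε < 1) :
    P {ω | (∑ i, X i ω ^ 2) ∉ Set.Icc ((k : ℝ) * (1 - ε)) ((k : ℝ) * (1 + ε))} ≤
      ENNReal.ofReal (2 * Real.exp (-(k : ℝ) * (ε ^ 2 - ε ^ 3) / 4)) := by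
  have := hindep.isProbabilityMeasure
  have hupper := measureReal_sum_sq_ge_le_exp hindep hdist hε0.le
  have hlower := measureReal_sum_sq_le_le_exp hindep hdist hε0.le hε1
  rw [Fintype.card_fin] at hupper hlower
  have hexp : exp (-(k : ℝ) * ε ^ 2 / 4) ≤ exp (-(k : ℝ) * (ε ^ 2 - ε ^ 3) / 4) :=
    exp_le_exp.2 <| by nlinarith [pow_pos hε0 3, k.cast_nonneg (α := ℝ)]
  rw [ENNReal.le_ofReal_iff_toReal_le (measure_ne_top _ _) (by positivity)]
  calc P.real {ω | (∑ i, X i ω ^ 2) ∉ Set.Icc ((k : ℝ) * (1 - ε)) ((k : ℝ) * (1 + ε))}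
      ≤ P.real ({ω | ∑ i, X i ω ^ 2 ≤ k * (1 - ε)} ∪ {ω | k * (1 + ε) ≤ ∑ i, X i ω ^ 2}) :=
        measureReal_mono fun ω hω => by
          simp only [Set.mem_ofPred_eq, Set.mem_Icc, not_and_or, not_le] at hω
          exact hω.imp le_of_lt le_of_lt
    _ ≤ _ := measureReal_union_le _ _
    _ ≤ 2 * exp (-(k : ℝ) * (ε ^ 2 - ε ^ 3) / 4) := by linarith

/-- chi-squared concentration: if `X_1, …, X_k` are i.i.d. standard
Gaussian random variables and `Z = Σ X_i²`, then for every `ε ∈ (0,1)`,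
`P(Z ∉ [k(1−ε), k(1+ε)]) ≤ 2 exp(−k(ε² − ε³)/4)`. -/
theorem chi_squared_concentration
    (k : ℕ) (Ω : Type*) (mΩ : MeasurableSpace Ω) (P : Measure Ω)
    (hP : IsProbabilityMeasure P)
    (X : Fin k → Ω → ℝ) (hmeas : ∀ i, Measurable (X i))
    (hindep : iIndepFun X P)
    (hdist : ∀ i, Measure.map (X i) P = gaussianReal 0 1)
    (ε : ℝ) (hε0 : 0 < ε) (hε1 : ε < 1) :
    P {ω | (∑ i, X i ω ^ 2) ∉ Set.Icc ((k : ℝ) * (1 - ε)) ((k : ℝ) * (1 + ε))} ≤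
      ENNReal.ofReal (2 * Real.exp (-(k : ℝ) * (ε ^ 2 - ε ^ 3) / 4)) :=
  chi_squared_concentration_general k Ω mΩ P X hindep hdist ε hε0 hε1
end
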